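/- With the notation of the context, I(w) = −(1/(ab))·I(h₂ + h₆ + h₇), where w(t,s) = 1/((t−1)s). -/

import Mathlib

open MeasureTheory

/-- The Dotsenko–Fateev weight `Φ(t,s) = |t|^a|s|^a|t−1|^b|s−1|^b|t−x|^c|s−y|^c|t−s|^g`. -/
noncomputable def dfWeight (a b c g x y : ℝ) (p : ℝ × ℝ) : ℝ :=
  |p.1| ^ a * |p.2| ^ a * |p.1 - 1| ^ b * |p.2 - 1| ^ b *
    |p.1 - x| ^ c * |p.2 - y| ^ c * |p.1 - p.2| ^ g

/-- The complement in `ℝ²` of the seven lines `t=0, t=1, t=x, s=0, s=1, s=y, t=s`. -/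
def dfComplement (x y : ℝ) : Set (ℝ × ℝ) :=
  {p | p.1 ≠ 0 ∧ p.1 ≠ 1 ∧ p.1 ≠ x ∧ p.2 ≠ 0 ∧ p.2 ≠ 1 ∧ p.2 ≠ y ∧ p.1 ≠ p.2}

/-- `I(h) = ∫_σ Φ h`. -/
noncomputable def dfInt (a b c g x y : ℝ) (σ : Set (ℝ × ℝ)) (h : ℝ × ℝ → ℝ) : ℝ :=
  ∫ p in σ, dfWeight a b c g x y p * h p

/-- `h₁ = bc/((t−x)(s−1))`. -/
noncomputable def h1 (b c x : ℝ) (p : ℝ × ℝ) : ℝ := b * c / ((p.1 - x) * (p.2 - 1))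

/-- `h₂ = bc/((t−1)(s−y))`. -/
noncomputable def h2 (b c y : ℝ) (p : ℝ × ℝ) : ℝ := b * c / ((p.1 - 1) * (p.2 - y))

/-- `h₃ = −cg/((t−x)(t−s))`. -/
noncomputable def h3 (c g x : ℝ) (p : ℝ × ℝ) : ℝ := -(c * g) / ((p.1 - x) * (p.1 - p.2))

/-- `h₄ = −cg/((s−y)(t−s))`. -/
noncomputable def h4 (c g y : ℝ) (p : ℝ × ℝ) : ℝ := -(c * g) / ((p.2 - y) * (p.1 - p.2))

/-- `h₅ = c²/((t−x)(s−y))`. -/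
noncomputable def h5 (c x y : ℝ) (p : ℝ × ℝ) : ℝ := c ^ 2 / ((p.1 - x) * (p.2 - y))

/-- `h₆ = −bg/((t−1)(t−s)) − bg/((s−1)(t−s))`. -/
noncomputable def h6 (b g : ℝ) (p : ℝ × ℝ) : ℝ :=
  -(b * g) / ((p.1 - 1) * (p.1 - p.2)) - b * g / ((p.2 - 1) * (p.1 - p.2))

/-- `h₇ = b²/((t−1)(s−1)) + bg/((s−1)(t−s))`. -/
noncomputable def h7 (b g : ℝ) (p : ℝ × ℝ) : ℝ :=
  b ^ 2 / ((p.1 - 1) * (p.2 - 1)) + b * g / ((p.2 - 1) * (p.1 - p.2))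

/-!
Write `∂ₛΦ = Φ · (a/s + b/(s-1) + c/(s-y) - g/(t-s))`. Then
`ab·Φ·w + Φ·(h₂ + h₆ + h₇) = b/(t-1) · ∂ₛΦ` as rational expressions, so
`ab·I(w) + I(h₂+h₆+h₇) = ∫_σ b/(t-1) · ∂ₛΦ`. A chamber is the set where each of the seven affine
forms keeps the sign it has at one point, so it is open and convex; as `σ` is also bounded, every
vertical slice of `σ` is a bounded open interval whose endpoints lie on the arrangement, where `Φ`
vanishes, and by Fubini the integral is `∫ b/(t-1) · (Φ(t,u) - Φ(t,l)) dt = 0`. All integrands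
are continuous on `ℝ²`, hence integrable on `σ`: the exponents exceed `1`, so `|ℓ|^e / ℓ` extends
continuously across the zero set of each form `ℓ`, by the value `0` that Lean gives to `0 / 0`.
-/

open Filter Set Bornology

namespace Real

theorem abs_rpow_sub_two_mul (e r : ℝ) : |r| ^ (e - 2) * r = |r| ^ e / r := by
  rcases eq_or_ne r 0 with rfl | hr
  · simp
  · have hr' : 0 < |r| := abs_pos.mpr hr
    rw [rpow_sub hr', rpow_two, sq_abs]
    field_simp

theorem hasDerivAt_abs_rpow' {e : ℝ} (he : 1 < e) (r : ℝ) :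
    HasDerivAt (fun r : ℝ => |r| ^ e) (e * (|r| ^ e / r)) r := by
  simpa only [mul_assoc, abs_rpow_sub_two_mul] using hasDerivAt_abs_rpow r he

/-- Up to the factor `e`, this is the derivative of the `C¹` function `|r| ^ e`. -/
theorem continuous_abs_rpow_div {e : ℝ} (he : 1 < e) : Continuous fun r : ℝ => |r| ^ e / r := by
  have hderiv : deriv (fun r : ℝ => |r| ^ e) = fun r => e * (|r| ^ e / r) :=
    funext fun r => (hasDerivAt_abs_rpow' he r).deriv
  have hC1 : ContDiff ℝ 1 fun r : ℝ => |r| ^ e := by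
    simpa only [Real.norm_eq_abs] using contDiff_norm_rpow (E := ℝ) he
  have hcont := hC1.continuous_deriv le_rfl
  rw [hderiv] at hcont
  simpa [(by linarith : e ≠ 0)] using hcont.const_mul e⁻¹

end Real

theorem Continuous.abs_rpow_div {X : Type*} [TopologicalSpace X] {f : X → ℝ} (hf : Continuous f)
    {e : ℝ} (he : 1 < e) : Continuous fun p => |f p| ^ e / f p :=
  (Real.continuous_abs_rpow_div he).comp hf

theorem continuous_prod_abs_rpow_div_prod {ι X : Type*} [Fintype ι] [DecidableEq ι]
    [TopologicalSpace X] {f : ι → X → ℝ} (hf : ∀ i, Continuous (f i)) {e : ι → ℝ}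
    (he : ∀ i, 0 ≤ e i) {D : Finset ι} (hD : ∀ i ∈ D, 1 < e i) :
    Continuous fun p => (∏ i, |f i p| ^ e i) / ∏ i ∈ D, f i p := by
  have hsplit : (fun p => (∏ i, |f i p| ^ e i) / ∏ i ∈ D, f i p) = fun p =>
      (∏ i ∈ D, |f i p| ^ e i / f i p) * ∏ i ∈ Dᶜ, |f i p| ^ e i := by
    funext p
    rw [← Finset.prod_mul_prod_compl D, Finset.prod_div_distrib, mul_div_right_comm]
  rw [hsplit]
  exact (continuous_finsetProd D fun i hi => (hf i).abs_rpow_div (hD i hi)).mul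
    (continuous_finsetProd _ fun i _ => (hf i).abs.rpow_const fun _ => Or.inr (he i))

theorem hasDerivAt_prod_abs_rpow {ι : Type*} [Fintype ι] [DecidableEq ι] {f : ι → ℝ → ℝ}
    {f' : ι → ℝ} {s : ℝ} (hf : ∀ i, HasDerivAt (f i) (f' i) s) {e : ι → ℝ}
    (he : ∀ i, 1 < e i) :
    HasDerivAt (fun s => ∏ i, |f i s| ^ e i)
      (∑ i, f' i * e i * (∏ j, |f j s| ^ e j) / f i s) s := by
  have hfactor i : HasDerivAt (fun s => |f i s| ^ e i) (e i * (|f i s| ^ e i / f i s) * f' i) s :=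
    (Real.hasDerivAt_abs_rpow' (he i) (f i s)).comp s (hf i)
  refine (HasDerivAt.fun_finsetProd (u := Finset.univ) fun i _ => hfactor i).congr_deriv ?_
  refine Finset.sum_congr rfl fun i _ => ?_
  rw [← Finset.prod_erase_mul _ (fun j => |f j s| ^ e j) (Finset.mem_univ i), smul_eq_mul]
  ring

theorem mem_connectedComponentIn_of_mem_closure {X : Type*} [TopologicalSpace X]
    [LocallyConnectedSpace X] {U : Set X} (hU : IsOpen U) {p q : X} (hq : q ∈ U)
    (hcl : q ∈ closure (connectedComponentIn U p)) : q ∈ connectedComponentIn U p := by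
  obtain ⟨r, hrq, hrp⟩ := mem_closure_iff.mp hcl _ hU.connectedComponentIn
    (mem_connectedComponentIn hq)
  rw [connectedComponentIn_eq hrp, ← connectedComponentIn_eq hrq]
  exact mem_connectedComponentIn hq

theorem convex_setOf_mul_pos (c : ℝ) : Convex ℝ {r : ℝ | 0 < r * c} := by
  rcases lt_trichotomy c 0 with hc | rfl | hc
  · have hset : {r : ℝ | 0 < r * c} = Iio 0 := by
      ext r
      simp only [mem_ofPred_eq, mem_Iio, ← neg_mul_neg r c,
        mul_pos_iff_of_pos_right (neg_pos.mpr hc), neg_pos]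
    rw [hset]
    exact convex_Iio 0
  · simpa using convex_empty
  · have hset : {r : ℝ | 0 < r * c} = Ioi 0 := by
      ext r
      exact mul_pos_iff_of_pos_right hc
    rw [hset]
    exact convex_Ioi 0

section Chamber

variable {E ι : Type*} [TopologicalSpace E] [AddCommGroup E] [Module ℝ E]
  [IsTopologicalAddGroup E] [ContinuousSMul ℝ E] {ℓ : ι → E →ᵃ[ℝ] ℝ}

theorem connectedComponentIn_setOf_ne_zero (hℓ : ∀ i, Continuous (ℓ i)) {p₀ : E}
    (hp₀ : ∀ i, ℓ i p₀ ≠ 0) :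
    connectedComponentIn {p | ∀ i, ℓ i p ≠ 0} p₀ = {q | ∀ i, 0 < ℓ i q * ℓ i p₀} := by
  apply Subset.antisymm
  · intro q hq i
    have himage : IsPreconnected (ℓ i '' connectedComponentIn {p | ∀ i, ℓ i p ≠ 0} p₀) :=
      isPreconnected_connectedComponentIn.image _ (hℓ i).continuousOn
    by_contra hneg
    have h0 : (0 : ℝ) ∈ uIcc (ℓ i q) (ℓ i p₀) := by
      rcases mul_nonpos_iff.mp (not_lt.mp hneg) with h | h
      · exact mem_uIcc.mpr (Or.inr ⟨h.2, h.1⟩)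
      · exact mem_uIcc.mpr (Or.inl ⟨h.1, h.2⟩)
    obtain ⟨r, hr, hr0⟩ := (isPreconnected_iff_ordConnected.mp himage).uIcc_subset
      (mem_image_of_mem _ hq) (mem_image_of_mem _ (mem_connectedComponentIn hp₀)) h0
    exact connectedComponentIn_subset _ _ hr i hr0
  · refine IsPreconnected.subset_connectedComponentIn ?_ (fun i => mul_self_pos.mpr (hp₀ i))
      fun q hq i hi => (hq i).ne' (by rw [hi, zero_mul])
    rw [ofPred_forall]
    exact (convex_iInter fun i => (convex_setOf_mul_pos _).affine_preimage (ℓ i)).isPreconnected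

theorem convex_connectedComponentIn_setOf_ne_zero (hℓ : ∀ i, Continuous (ℓ i)) (p₀ : E) :
    Convex ℝ (connectedComponentIn {p | ∀ i, ℓ i p ≠ 0} p₀) := by
  by_cases hp₀ : ∀ i, ℓ i p₀ ≠ 0
  · rw [connectedComponentIn_setOf_ne_zero hℓ hp₀, ofPred_forall]
    exact convex_iInter fun i => (convex_setOf_mul_pos _).affine_preimage (ℓ i)
  · rw [connectedComponentIn_eq_empty (show p₀ ∉ {p | ∀ i, ℓ i p ≠ 0} from hp₀)]
    exact convex_empty

end Chamber

theorem IsOpen.eq_Ioo_csInf_csSup {S : Set ℝ} (hS : IsOpen S) (hc : IsPreconnected S)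
    (hb : IsBounded S) : S = Ioo (sInf S) (sSup S) := by
  rcases S.eq_empty_or_nonempty with rfl | hne
  · simp
  refine Subset.antisymm (fun z hz => ?_) ((IsConnected.Ioo_csInf_csSup_subset ⟨hne, hc⟩
    hb.bddBelow hb.bddAbove))
  obtain ⟨ε, hε, hball⟩ := Metric.isOpen_iff.mp hS z hz
  have hlo : z - ε / 2 ∈ S :=
    hball (by rw [Metric.mem_ball, Real.dist_eq, abs_of_neg] <;> linarith)
  have hhi : z + ε / 2 ∈ S :=
    hball (by rw [Metric.mem_ball, Real.dist_eq, abs_of_pos] <;> linarith)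
  exact ⟨(csInf_le hb.bddBelow hlo).trans_lt (by linarith),
    (by linarith : z < z + ε / 2).trans_le (le_csSup hb.bddAbove hhi)⟩

theorem setIntegral_deriv_eq_zero_of_frontier {S : Set ℝ} (hS : IsOpen S) (hc : IsPreconnected S)
    (hb : IsBounded S) {ψ ψ' : ℝ → ℝ} (hderiv : ∀ s, HasDerivAt ψ (ψ' s) s)
    (hcont : Continuous ψ') (hzero : ∀ s ∈ frontier S, ψ s = 0) : ∫ s in S, ψ' s = 0 := by
  rcases S.eq_empty_or_nonempty with rfl | hne
  · simp
  rw [hS.eq_Ioo_csInf_csSup hc hb] at hne hzero ⊢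
  have hlt := nonempty_Ioo.mp hne
  rw [frontier_Ioo hlt] at hzero
  rw [← integral_Ioc_eq_integral_Ioo, ← intervalIntegral.integral_of_le hlt.le,
    intervalIntegral.integral_eq_sub_of_hasDerivAt (fun s _ => hderiv s)
      (hcont.intervalIntegrable _ _), hzero _ (by simp), hzero _ (by simp), sub_zero]

theorem Convex.preimage_prodMk {σ : Set (ℝ × ℝ)} (hσ : Convex ℝ σ) (t : ℝ) :
    Convex ℝ (Prod.mk t ⁻¹' σ) := by
  intro s₁ h₁ s₂ h₂ u v hu hv huv
  have hcomb : (t, u • s₁ + v • s₂) = u • (t, s₁) + v • (t, s₂) := by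
    ext
    · simp only [Prod.fst_add, Prod.smul_fst, smul_eq_mul, ← add_mul, huv, one_mul]
    · rfl
  rw [mem_preimage, hcomb]
  exact hσ h₁ h₂ hu hv huv

theorem setIntegral_mul_deriv_snd_eq_zero {σ : Set (ℝ × ℝ)} (hσo : IsOpen σ) (hσc : Convex ℝ σ)
    (hσb : IsBounded σ) {Φ Φ' : ℝ × ℝ → ℝ}
    (hderiv : ∀ t s, HasDerivAt (fun s => Φ (t, s)) (Φ' (t, s)) s)
    (hcont : ∀ t, Continuous fun s => Φ' (t, s)) (hzero : ∀ p ∈ frontier σ, Φ p = 0)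
    (k : ℝ → ℝ) (hint : IntegrableOn (fun p => k p.1 * Φ' p) σ) :
    ∫ p in σ, k p.1 * Φ' p = 0 := by
  have hslice t : ∫ s in Prod.mk t ⁻¹' σ, Φ' (t, s) = 0 := by
    have hSo : IsOpen (Prod.mk t ⁻¹' σ) := hσo.preimage (Continuous.prodMk_right t)
    refine setIntegral_deriv_eq_zero_of_frontier hSo (hσc.preimage_prodMk t).isPreconnected
      (hσb.image_snd.subset fun s hs => ⟨(t, s), hs, rfl⟩) (hderiv t) (hcont t) fun s hs => ?_
    rw [hSo.frontier_eq] at hs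
    rw [hσo.frontier_eq] at hzero
    exact hzero _ ⟨(Continuous.prodMk_right t).closure_preimage_subset σ hs.1, hs.2⟩
  rw [← integral_indicator hσo.measurableSet, Measure.volume_eq_prod,
    integral_prod _ (hint.integrable_indicator hσo.measurableSet)]
  refine integral_eq_zero_of_ae (Eventually.of_forall fun t => ?_)
  simp only [Pi.zero_apply]
  change ∫ s, (Prod.mk t ⁻¹' σ).indicator (fun s => k t * Φ' (t, s)) s = 0
  rw [integral_indicator (hσo.preimage (Continuous.prodMk_right t)).measurableSet,
    integral_const_mul, hslice, mul_zero]

theorem Continuous.integrableOn_of_isBounded {X E : Type*} [MetricSpace X] [ProperSpace X]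
    [MeasurableSpace X] [OpensMeasurableSpace X] {μ : Measure X} [IsFiniteMeasureOnCompacts μ]
    [NormedAddCommGroup E] {f : X → E} (hf : Continuous f) {s : Set X} (hs : IsBounded s) :
    IntegrableOn f s μ :=
  (hf.continuousOn.integrableOn_compact hs.isCompact_closure).mono_set subset_closure

theorem AffineMap.hasDerivAt_apply_prodMk (ℓ : ℝ × ℝ →ᵃ[ℝ] ℝ) (t s : ℝ) :
    HasDerivAt (fun s => ℓ (t, s)) (ℓ.linear (0, 1)) s := by
  have hsplit : (fun s => ℓ (t, s)) = fun s => s * ℓ.linear (0, 1) + ℓ (t, 0) := by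
    funext s
    rw [← smul_eq_mul, ← ℓ.linear.map_smul, Prod.smul_mk, smul_zero, smul_eq_mul, mul_one,
      ← vadd_eq_add, ← ℓ.map_vadd, vadd_eq_add, Prod.mk_add_mk, zero_add, add_zero]
  rw [hsplit]
  simpa using ((hasDerivAt_id s).mul_const (ℓ.linear (0, 1))).add_const (ℓ (t, 0))

def dfForm (x y : ℝ) : Fin 7 → ℝ × ℝ →ᵃ[ℝ] ℝ :=
  ![AffineMap.fst, AffineMap.fst - AffineMap.const ℝ _ 1, AffineMap.fst - AffineMap.const ℝ _ x,
    AffineMap.snd, AffineMap.snd - AffineMap.const ℝ _ 1, AffineMap.snd - AffineMap.const ℝ _ y,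
    AffineMap.fst - AffineMap.snd]

def dfExp (a b c g : ℝ) : Fin 7 → ℝ := ![a, b, c, a, b, c, g]

section DotsenkoFateev

variable {a b c g x y : ℝ}

theorem continuous_dfForm (i : Fin 7) : Continuous (dfForm x y i) :=
  AffineMap.continuous_of_finiteDimensional _

theorem dfForm_apply (i : Fin 7) (p : ℝ × ℝ) :
    dfForm x y i p = ![p.1, p.1 - 1, p.1 - x, p.2, p.2 - 1, p.2 - y, p.1 - p.2] i := by
  fin_cases i <;> simp [dfForm]

theorem dfForm_linear_apply (i : Fin 7) :
    (dfForm x y i).linear (0, 1) = ![0, 0, 0, 1, 1, 1, -1] i := by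
  fin_cases i <;> simp [dfForm]

theorem dfWeight_eq_prod (p : ℝ × ℝ) :
    dfWeight a b c g x y p = ∏ i, |dfForm x y i p| ^ dfExp a b c g i := by
  simp only [dfWeight, Fin.prod_univ_seven, dfForm_apply, dfExp, Matrix.cons_val]
  ring

theorem dfComplement_eq : dfComplement x y = {p | ∀ i, dfForm x y i p ≠ 0} := by
  ext p
  simp [dfComplement, dfForm_apply, Fin.forall_fin_succ, sub_eq_zero]

theorem dfExp_gt_one (ha : 1 < a) (hb : 1 < b) (hc : 1 < c) (hg : 1 < g) (i : Fin 7) :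
    1 < dfExp a b c g i := by
  fin_cases i <;> assumption

theorem isOpen_dfComplement : IsOpen (dfComplement x y) := by
  rw [dfComplement_eq, ofPred_forall]
  exact isOpen_iInter_of_finite fun i => isOpen_ne_fun (continuous_dfForm i) continuous_const

theorem dfWeight_eq_zero_of_mem_frontier (ha : 1 < a) (hb : 1 < b) (hc : 1 < c) (hg : 1 < g)
    {p₀ p : ℝ × ℝ} (hp : p ∈ frontier (connectedComponentIn (dfComplement x y) p₀)) :
    dfWeight a b c g x y p = 0 := by
  rw [isOpen_dfComplement.connectedComponentIn.frontier_eq] at hp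
  have hnot : p ∉ dfComplement x y := fun hmem =>
    hp.2 (mem_connectedComponentIn_of_mem_closure isOpen_dfComplement hmem hp.1)
  rw [dfComplement_eq, mem_ofPred_eq] at hnot
  simp only [not_forall, not_not] at hnot
  obtain ⟨i, hi⟩ := hnot
  rw [dfWeight_eq_prod]
  refine Finset.prod_eq_zero (Finset.mem_univ i) ?_
  rw [hi, abs_zero, Real.zero_rpow (zero_lt_one.trans (dfExp_gt_one ha hb hc hg i)).ne']

theorem continuous_dfWeight_div_prod (ha : 1 < a) (hb : 1 < b) (hc : 1 < c) (hg : 1 < g)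
    (D : Finset (Fin 7)) :
    Continuous fun p => dfWeight a b c g x y p / ∏ i ∈ D, dfForm x y i p := by
  simp_rw [dfWeight_eq_prod]
  have he := dfExp_gt_one ha hb hc hg
  exact continuous_prod_abs_rpow_div_prod continuous_dfForm (fun i => (zero_lt_one.trans (he i)).le)
    fun i _ => he i

noncomputable def dfWeightDerivSnd (a b c g x y : ℝ) (p : ℝ × ℝ) : ℝ :=
  dfWeight a b c g x y p * (a / p.2 + b / (p.2 - 1) + c / (p.2 - y) - g / (p.1 - p.2))

theorem hasDerivAt_dfWeight_snd (ha : 1 < a) (hb : 1 < b) (hc : 1 < c) (hg : 1 < g) (t s : ℝ) :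
    HasDerivAt (fun s => dfWeight a b c g x y (t, s)) (dfWeightDerivSnd a b c g x y (t, s)) s := by
  simp_rw [dfWeight_eq_prod]
  refine (hasDerivAt_prod_abs_rpow (fun i => (dfForm x y i).hasDerivAt_apply_prodMk t s)
    (dfExp_gt_one ha hb hc hg)).congr_deriv ?_
  rw [dfWeightDerivSnd, dfWeight_eq_prod]
  simp only [Fin.sum_univ_seven, dfForm_apply, dfForm_linear_apply, dfExp, Matrix.cons_val]
  ring

theorem continuous_dfWeightDerivSnd (ha : 1 < a) (hb : 1 < b) (hc : 1 < c) (hg : 1 < g) :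
    Continuous (dfWeightDerivSnd a b c g x y) := by
  have hsplit : dfWeightDerivSnd a b c g x y = fun p =>
      a * (dfWeight a b c g x y p / ∏ i ∈ {3}, dfForm x y i p) +
        b * (dfWeight a b c g x y p / ∏ i ∈ {4}, dfForm x y i p) +
        c * (dfWeight a b c g x y p / ∏ i ∈ {5}, dfForm x y i p) -
        g * (dfWeight a b c g x y p / ∏ i ∈ {6}, dfForm x y i p) := by
    funext p
    simp only [dfWeightDerivSnd, Finset.prod_singleton, dfForm_apply, Matrix.cons_val]
    ring
  have h := continuous_dfWeight_div_prod (x := x) (y := y) ha hb hc hg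
  rw [hsplit]
  fun_prop

theorem dfWeight_mul_add_eq (p : ℝ × ℝ) :
    a * b * (dfWeight a b c g x y p * (1 / ((p.1 - 1) * p.2))) +
        dfWeight a b c g x y p * (h2 b c y p + h6 b g p + h7 b g p) =
      b / (p.1 - 1) * dfWeightDerivSnd a b c g x y p := by
  simp only [dfWeightDerivSnd, h2, h6, h7, div_eq_mul_inv, mul_inv]
  ring

theorem continuous_dfWeight_mul_omega24 (ha : 1 < a) (hb : 1 < b) (hc : 1 < c) (hg : 1 < g) :
    Continuous fun p => dfWeight a b c g x y p * (1 / ((p.1 - 1) * p.2)) := by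
  convert continuous_dfWeight_div_prod (x := x) (y := y) ha hb hc hg {1, 3} using 2 with p
  simp only [Finset.prod_pair (by decide : (1 : Fin 7) ≠ 3), dfForm_apply, Matrix.cons_val,
    div_eq_mul_inv, mul_inv]
  ring

theorem continuous_dfWeight_mul_h2_add_h6_add_h7 (ha : 1 < a) (hb : 1 < b) (hc : 1 < c)
    (hg : 1 < g) :
    Continuous fun p => dfWeight a b c g x y p * (h2 b c y p + h6 b g p + h7 b g p) := by
  have hsplit : (fun p => dfWeight a b c g x y p * (h2 b c y p + h6 b g p + h7 b g p)) = fun p =>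
      b * c * (dfWeight a b c g x y p / ∏ i ∈ {1, 5}, dfForm x y i p) -
        b * g * (dfWeight a b c g x y p / ∏ i ∈ {1, 6}, dfForm x y i p) +
        b ^ 2 * (dfWeight a b c g x y p / ∏ i ∈ {1, 4}, dfForm x y i p) := by
    funext p
    simp only [h2, h6, h7, Finset.prod_pair (by decide : (1 : Fin 7) ≠ 4),
      Finset.prod_pair (by decide : (1 : Fin 7) ≠ 5), Finset.prod_pair (by decide : (1 : Fin 7) ≠ 6),
      dfForm_apply, Matrix.cons_val, div_eq_mul_inv, mul_inv]
    ring
  have h := continuous_dfWeight_div_prod (x := x) (y := y) ha hb hc hg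
  rw [hsplit]
  fun_prop

end DotsenkoFateev

theorem expansion_omega24_general (x y a b c g : ℝ)
    (ha : 1 < a) (hb : 1 < b) (hc : 1 < c) (hg : 1 < g)
    (σ : Set (ℝ × ℝ)) (hbd : Bornology.IsBounded σ)
    (hcc : ∃ p ∈ dfComplement x y, σ = connectedComponentIn (dfComplement x y) p) :
    dfInt a b c g x y σ (fun p => 1 / ((p.1 - 1) * p.2)) =
      -(1 / (a * b)) * dfInt a b c g x y σ (fun p => h2 b c y p + h6 b g p + h7 b g p) := by
  obtain ⟨p₀, -, hσ⟩ := hcc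
  have hopen : IsOpen σ := hσ ▸ isOpen_dfComplement.connectedComponentIn
  have hconv : Convex ℝ σ := by
    rw [hσ, dfComplement_eq]
    exact convex_connectedComponentIn_setOf_ne_zero continuous_dfForm p₀
  have hw : IntegrableOn (fun p => dfWeight a b c g x y p * (1 / ((p.1 - 1) * p.2))) σ :=
    (continuous_dfWeight_mul_omega24 ha hb hc hg).integrableOn_of_isBounded hbd
  have hh : IntegrableOn
      (fun p => dfWeight a b c g x y p * (h2 b c y p + h6 b g p + h7 b g p)) σ :=
    (continuous_dfWeight_mul_h2_add_h6_add_h7 ha hb hc hg).integrableOn_of_isBounded hbd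
  have hzero := setIntegral_mul_deriv_snd_eq_zero hopen hconv hbd
    (hasDerivAt_dfWeight_snd ha hb hc hg)
    (fun t => (continuous_dfWeightDerivSnd ha hb hc hg).comp (Continuous.prodMk_right t))
    (fun p hp => dfWeight_eq_zero_of_mem_frontier ha hb hc hg (hσ ▸ hp)) (fun t => b / (t - 1))
    (IntegrableOn.congr_fun ((hw.const_mul (a * b)).add hh) (fun p _ => dfWeight_mul_add_eq p)
      hopen.measurableSet)
  simp only [← dfWeight_mul_add_eq] at hzero
  rw [integral_add (hw.const_mul _) hh, integral_const_mul] at hzero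
  have hab : a * b ≠ 0 := by positivity
  unfold dfInt
  rw [eq_neg_of_add_eq_zero_right hzero, neg_mul_neg, one_div, inv_mul_cancel_left₀ hab]

/-- the cohomological expansion ω₂₄ ∼ −(1/(ab))(η₂+η₆+η₇)
integrated over a bounded chamber `σ` of the Dotsenko–Fateev arrangement. -/
theorem expansion_omega24 (x y a b c g : ℝ)
    (hx0 : x ≠ 0) (hx1 : x ≠ 1) (hy0 : y ≠ 0) (hy1 : y ≠ 1) (hxy : x ≠ y)
    (ha : 1 < a) (hb : 1 < b) (hc : 1 < c) (hg : 1 < g)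
    (σ : Set (ℝ × ℝ)) (hbd : Bornology.IsBounded σ)
    (hcc : ∃ p ∈ dfComplement x y, σ = connectedComponentIn (dfComplement x y) p) :
    dfInt a b c g x y σ (fun p => 1 / ((p.1 - 1) * p.2)) =
      -(1 / (a * b)) * dfInt a b c g x y σ (fun p => h2 b c y p + h6 b g p + h7 b g p) :=
  expansion_omega24_general x y a b c g ha hb hc hg σ hbd hcc
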